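/- Suppose L is transitive, with an A-linear splitting t : Der_R(A) → L of the anchor (ρ ∘ t = id), and let β : L → End_R(Der_R(A)) be a representation of L on Der_R(A), that is: β is additive and A-linear in its subscript (β_{a • X} = a • β_X as operators), each β_X satisfies the Leibniz rule β_X(a • V) = a • β_X V + ρ(X)(a) • V, and β is flat (β_{⁅X,Y⁆} = β_X ∘ β_Y − β_Y ∘ β_X). Then the formula ∇_V X := t(β_X(V)) + ⁅t(V), X⁆ defines a Cartan connection on L (the reductive Cartan connection associated to the splitting t and the representation β, equation (top) of Section 6.2). -/
import Mathlib


variable {R A L : Type*} [CommRing R] [CommRing A] [Algebra R A]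
  [LieRing L] [LieAlgebra R L] [Module A L]
  [IsScalarTower R A L] [SMulCommClass R A L] [SMulCommClass A R L]

/-- The induced `𝔤`-connection on derivations: `∇̄_X V := ρ(∇_V X) + ⁅ρ(X), V⁆`. -/
def barDer (ρ : L →ₗ[A] Derivation R A A) (D : Derivation R A A → L → L)
    (X : L) (V : Derivation R A A) : Derivation R A A :=
  ρ (D V X) + ⁅ρ X, V⁆

/-- The induced `𝔤`-connection of `L` on itself: `∇̄_X Y := ∇_{ρ(Y)} X + ⁅X, Y⁆`. -/
def barSelf (ρ : L →ₗ[A] Derivation R A A) (D : Derivation R A A → L → L)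
    (X Y : L) : L :=
  D (ρ Y) X + ⁅X, Y⁆

/-- `D` is a connection on `L`: additive in both arguments, `A`-linear in the
derivation argument, and satisfying the Leibniz rule. -/
def IsConnection (D : Derivation R A A → L → L) : Prop :=
  (∀ (V W : Derivation R A A) (X : L), D (V + W) X = D V X + D W X) ∧
  (∀ (V : Derivation R A A) (X Y : L), D V (X + Y) = D V X + D V Y) ∧
  (∀ (a : A) (V : Derivation R A A) (X : L), D (a • V) X = a • D V X) ∧
  (∀ (V : Derivation R A A) (a : A) (X : L), D V (a • X) = a • D V X + V a • X)

/-- `D` is a Cartan connection: it is compatible with the bracket of `L`. -/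
def IsCartanConnection (ρ : L →ₗ[A] Derivation R A A)
    (D : Derivation R A A → L → L) : Prop :=
  ∀ (V : Derivation R A A) (X Y : L),
    D V ⁅X, Y⁆ = ⁅D V X, Y⁆ + ⁅X, D V Y⁆
      + D (barDer ρ D Y V) X - D (barDer ρ D X V) Y

/-- `D : L → End_R(L)` is a representation of `L` on itself extending the canonical
representation of `L` on the kernel of the anchor `ρ`. -/
def IsSelfRep (ρ : L →ₗ[A] Derivation R A A) (D : L → L → L) : Prop :=
  (∀ X Y Z : L, D (X + Y) Z = D X Z + D Y Z) ∧
  (∀ (a : A) (X Y : L), D (a • X) Y = a • D X Y) ∧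
  (∀ X Y Z : L, D X (Y + Z) = D X Y + D X Z) ∧
  (∀ (r : R) (X Y : L), D X (r • Y) = r • D X Y) ∧
  (∀ (X : L) (a : A) (Y : L), D X (a • Y) = a • D X Y + ρ X a • Y) ∧
  (∀ X Y Z : L, D ⁅X, Y⁆ Z = D X (D Y Z) - D Y (D X Z)) ∧
  (∀ X Y : L, ρ Y = 0 → D X Y = ⁅X, Y⁆)

/-- For a transitive `L` with `A`-linear splitting `t` of the anchor
and a representation `β` of `L` on `Der_R(A)`, the formula
`∇_V X := t(β_X(V)) + ⁅t(V), X⁆` defines a Cartan connection on `L` (the reductive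
Cartan connection associated to `t` and `β`). -/
theorem reductive_cartan_connection
    (ρ : L →ₗ[A] Derivation R A A)
    (hanchor : ∀ X Y : L, ρ ⁅X, Y⁆ = ⁅ρ X, ρ Y⁆)
    (hleib : ∀ (X : L) (a : A) (Y : L), ⁅X, a • Y⁆ = a • ⁅X, Y⁆ + ρ X a • Y)
    (t : Derivation R A A →ₗ[A] L) (ht : ∀ V : Derivation R A A, ρ (t V) = V)
    (β : L → Derivation R A A → Derivation R A A)
    -- β is additive and A-linear in its subscript
    (hβadd : ∀ (X Y : L) (V : Derivation R A A), β (X + Y) V = β X V + β Y V)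
    (hβsmul : ∀ (a : A) (X : L) (V : Derivation R A A), β (a • X) V = a • β X V)
    -- each β_X is an R-linear endomorphism of Der_R(A)
    (hβadd' : ∀ (X : L) (V W : Derivation R A A), β X (V + W) = β X V + β X W)
    (hβsmul' : ∀ (r : R) (X : L) (V : Derivation R A A), β X (r • V) = r • β X V)
    -- the Leibniz rule
    (hβleib : ∀ (X : L) (a : A) (V : Derivation R A A),
      β X (a • V) = a • β X V + ρ X a • V)
    -- flatness
    (hβflat : ∀ (X Y : L) (V : Derivation R A A),
      β ⁅X, Y⁆ V = β X (β Y V) - β Y (β X V)) :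
    IsConnection (fun (V : Derivation R A A) (X : L) => t (β X V) + ⁅t V, X⁆) ∧
      IsCartanConnection ρ
        (fun (V : Derivation R A A) (X : L) => t (β X V) + ⁅t V, X⁆) := by
  set D : Derivation R A A → L → L :=
    fun (V : Derivation R A A) (X : L) => t (β X V) + ⁅t V, X⁆ with hD
  have hbar : ∀ (X : L) (V : Derivation R A A), barDer ρ D X V = β X V := by
    intro X V
    unfold barDer
    rw [hD]
    simp only [map_add, ht, hanchor, ht]
    have h0 : ⁅V, ρ X⁆ = -⁅ρ X, V⁆ := by rw [← lie_skew]
    rw [h0]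
    abel
  have hsk : ∀ (Z X : L) (a : A), ⁅a • Z, X⁆ = a • ⁅Z, X⁆ - ρ X a • Z := by
    intro Z X a
    have h2 : ⁅a • Z, X⁆ = -⁅X, a • Z⁆ := by rw [← lie_skew]
    have h3 : ⁅Z, X⁆ = -⁅X, Z⁆ := by rw [← lie_skew]
    rw [h2, hleib, h3, smul_neg]
    abel
  constructor
  · refine ⟨?_, ?_, ?_, ?_⟩
    · intro V W X
      simp only [hD, hβadd', map_add, lie_add, add_lie]
      abel
    · intro V X Y
      simp only [hD, hβadd, map_add, lie_add]
      abel
    · intro a V X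
      simp only [hD, hβleib, map_add, map_smul]
      rw [hsk, smul_add]
      abel
    · intro V a X
      simp only [hD, hβsmul, hleib, ht, map_smul]
      rw [smul_add]
      abel
  · intro V X Y
    simp only [hbar]
    simp only [hD, hβflat, map_sub]
    have hjac : ⁅t V, ⁅X, Y⁆⁆ = ⁅⁅t V, X⁆, Y⁆ + ⁅X, ⁅t V, Y⁆⁆ := leibniz_lie _ _ _
    rw [hjac]
    have : ⁅X, t (β Y V)⁆ = -⁅t (β Y V), X⁆ := by rw [← lie_skew]
    rw [lie_add, add_lie, this]
    abel
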